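/- Let σ be a finite sequence of updates over ℤⁿ all of whose partial states x^(t) satisfy ‖x^(t)‖_∞ ≤ 2M−1, with final vector x ∈ {−M, M}ⁿ. If for some coordinate i and split σ = σ₁·σ₂ we have max over t of (freq σ₂^(t))_i ≥ (freq σ₂)_i + M, then x_i = −M. -/

import Mathlib

/-! If `x_i = M`, then the state after `σ₁ ++ σ₂^(t)` has `i`-th coordinate
`x_i - (freq σ₂)_i + (freq σ₂^(t))_i ≥ 2M`, which leaves the box `[-(2M-1), 2M-1]`. -/

def freq {n : ℕ} (σ : List (Fin n × ℤ)) : Fin n → ℤ :=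
  fun i => (σ.map fun u => if u.1 = i then u.2 else 0).sum

lemma freq_append {n : ℕ} (σ τ : List (Fin n × ℤ)) (i : Fin n) :
    freq (σ ++ τ) i = freq σ i + freq τ i := by
  simp [freq]

lemma freq_take_length_add {n : ℕ} (σ τ : List (Fin n × ℤ)) (t : ℕ) (i : Fin n) :
    freq ((σ ++ τ).take (σ.length + t)) i = freq σ i + freq (τ.take t) i := by
  rw [List.take_length_add_append, freq_append]

theorem statement1_general {n : ℕ} (M : ℤ) (σ₁ σ₂ : List (Fin n × ℤ))
    (hbox : ∀ t ≤ (σ₁ ++ σ₂).length, ∀ j : Fin n,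
      |freq ((σ₁ ++ σ₂).take t) j| ≤ 2 * M - 1)
    (hfin : ∀ j : Fin n, freq (σ₁ ++ σ₂) j = -M ∨ freq (σ₁ ++ σ₂) j = M)
    (i : Fin n)
    (hmax : ∃ t ≤ σ₂.length, freq σ₂ i + M ≤ freq (σ₂.take t) i) :
    freq (σ₁ ++ σ₂) i = -M := by
  obtain ⟨t, ht, hrise⟩ := hmax
  have hmid := hbox (σ₁.length + t) (by simp [ht]) i
  rw [freq_take_length_add] at hmid
  refine (hfin i).resolve_right fun hpos => ?_
  rw [freq_append] at hpos
  linarith [le_abs_self (freq σ₁ i + freq (σ₂.take t) i)]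

/-- If every partial state of the stream `σ₁ ++ σ₂` lies in `[-(2M-1), 2M-1]ⁿ`,
the final vector lies in `{-M, M}ⁿ`, and for some coordinate `i` the running value of
`σ₂` at coordinate `i` rises at least `M` above its final value, then the final value of
coordinate `i` is `-M`. -/
theorem statement1 {n : ℕ} (M : ℤ) (hM : 1 ≤ M) (σ₁ σ₂ : List (Fin n × ℤ))
    (hbox : ∀ t ≤ (σ₁ ++ σ₂).length, ∀ j : Fin n,
      |freq ((σ₁ ++ σ₂).take t) j| ≤ 2 * M - 1)
    (hfin : ∀ j : Fin n, freq (σ₁ ++ σ₂) j = -M ∨ freq (σ₁ ++ σ₂) j = M)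
    (i : Fin n)
    (hmax : ∃ t ≤ σ₂.length, freq σ₂ i + M ≤ freq (σ₂.take t) i) :
    freq (σ₁ ++ σ₂) i = -M :=
  statement1_general M σ₁ σ₂ hbox hfin i hmax
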